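/- Let 𝒞 be a quasiminimal excellent class, let f : M → N be a closed embedding with M, N ∈ 𝒞, and suppose dim M ≥ ℵ₀. Then f is an elementary embedding: for every first-order L-formula θ(x̄) and every tuple ā from M, M ⊨ θ(ā) if and only if N ⊨ θ(f(ā)). (This is the finitary instance of the paper's claim that f is an L_{∞,ω}-embedding.) -/

import Mathlib

/-!  Common framework: quasiminimal excellent classes (Zilber / Kirby). -/

open FirstOrder FirstOrder.Language Cardinal Set

universe u

namespace QMEC

variable (L : FirstOrder.Language.{u, u})

/-- An `L`-structure equipped with a closure operator (intended to be a pregeometry). -/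
structure QMModel : Type (u + 1) where
  carrier : Type u
  [str : L.Structure carrier]
  cl : Set carrier → Set carrier

attribute [instance] QMModel.str

/-- `cl` is a pregeometry on `α`. -/
structure IsPregeom {α : Type u} (cl : Set α → Set α) : Prop where
  subset_cl : ∀ X : Set α, X ⊆ cl X
  mono : ∀ ⦃X Y : Set α⦄, X ⊆ Y → cl X ⊆ cl Y
  idem : ∀ X : Set α, cl (cl X) = cl X
  finChar : ∀ (X : Set α) (y : α), y ∈ cl X → ∃ X₀ : Finset α, ↑X₀ ⊆ X ∧ y ∈ cl ↑X₀
  exchange : ∀ (X : Set α) (y z : α), y ∈ cl (X ∪ {z}) → y ∉ cl X → z ∈ cl (X ∪ {y})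

/-- `B` is independent over `G`. -/
def IndepOver {α : Type u} (cl : Set α → Set α) (G B : Set α) : Prop :=
  ∀ b ∈ B, b ∉ cl (G ∪ (B \ {b}))

/-- `B` is an independent set. -/
def Indep {α : Type u} (cl : Set α → Set α) (B : Set α) : Prop :=
  ∀ b ∈ B, b ∉ cl (B \ {b})

/-- `B` is a basis of `α` over `G`. -/
def IsBasisOver {α : Type u} (cl : Set α → Set α) (G B : Set α) : Prop :=
  IndepOver cl G B ∧ cl (G ∪ B) = Set.univ

/-- `H` has dimension `κ`: it has a basis of cardinality `κ`. -/
def HasDim (H : QMModel L) (κ : Cardinal.{u}) : Prop :=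
  ∃ B : Set H.carrier, IsBasisOver H.cl ∅ B ∧ #B = κ

variable {L}

/-- A partial embedding with domain `D`: injective on `D` and preserving (in both
directions) all quantifier-free formulas at tuples from `D`. -/
def IsPartialEmb (H H' : QMModel L) (D : Set H.carrier) (f : H.carrier → H'.carrier) : Prop :=
  Set.InjOn f D ∧
    ∀ (n : ℕ) (φ : L.Formula (Fin n)), φ.IsQF →
      ∀ a : Fin n → H.carrier, (∀ i, a i ∈ D) →
        (φ.Realize a ↔ φ.Realize (f ∘ a))

/-- A closed partial embedding: the image of every closed subset of the domain is closed. -/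
def IsClosedPartialEmb (H H' : QMModel L) (D : Set H.carrier)
    (f : H.carrier → H'.carrier) : Prop :=
  IsPartialEmb H H' D f ∧
    ∀ X ⊆ D, H.cl X = X → H'.cl (f '' X) = f '' X

/-- A crown: a finite union of closures of subsets of an independent set. -/
def IsCrown (H : QMModel L) (C : Set H.carrier) : Prop :=
  ∃ (B : Set H.carrier) (n : ℕ) (Bs : Fin n → Set H.carrier),
    Indep H.cl B ∧ (∀ i, Bs i ⊆ B) ∧ C = ⋃ i, H.cl (Bs i)

/-- Combination `f ∪ g` of two partial maps: use `f` on `D`, `g` elsewhere. -/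
noncomputable def combine {α β : Type*} (D : Set α) (f g : α → β) : α → β :=
  fun x => @ite _ (x ∈ D) (Classical.propDecidable _) (f x) (g x)

/-- Extension of a partial map by one pair `(y, y')`. -/
noncomputable def extend1 {α β : Type*} (f : α → β) (y : α) (y' : β) : α → β :=
  fun x => @ite _ (x = y) (Classical.propDecidable _) y' (f x)

/-- The submodel of `H` on a substructure `S`, with prescribed closure operator. -/
def QMModel.substruct (H : QMModel L) (S : L.Substructure H.carrier)
    (cls : Set ↥S → Set ↥S) : QMModel L :=
  { carrier := ↥S, cl := cls }

/-- The restriction of the closure operator of `H` to a subset (as a subtype). -/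
def QMModel.restrictCl (H : QMModel L) (S : L.Substructure H.carrier) :
    Set ↥S → Set ↥S :=
  fun Y => Subtype.val ⁻¹' H.cl (Subtype.val '' Y)

/-- `G` is the empty set or a countable closed subset of `H`. -/
def EmptyOrCtbleClosed (H : QMModel L) (G : Set H.carrier) : Prop :=
  G = ∅ ∨ (G.Countable ∧ H.cl G = G)

/-- Axiom I (pregeometry) for a class of models. -/
structure AxiomI (C : QMModel L → Prop) : Prop where
  pregeom : ∀ H, C H → IsPregeom H.cl
  ccp : ∀ H, C H → ∀ X : Set H.carrier, X.Finite → (H.cl X).Countable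
  closedSub : ∀ H, C H → ∀ X : Set H.carrier,
    ∃ S : L.Substructure H.carrier, (S : Set H.carrier) = H.cl X ∧
      C (H.substruct S (H.restrictCl S))
  clPreserved : ∀ H H' : QMModel L, C H → C H' →
    ∀ (D : Set H.carrier) (f : H.carrier → H'.carrier), IsPartialEmb H H' D f →
      ∀ X ⊆ D, ∀ y ∈ H.cl X, y ∈ D → f y ∈ H'.cl (f '' X)

/-- Axiom II (ℵ₀-homogeneity over countable closed submodels and over ∅). -/
structure AxiomII (C : QMModel L → Prop) : Prop where
  homog1 : ∀ H H' : QMModel L, C H → C H' →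
    ∀ (G : Set H.carrier) (G' : Set H'.carrier) (g : H.carrier → H'.carrier),
      EmptyOrCtbleClosed H G → EmptyOrCtbleClosed H' G' →
      IsPartialEmb H H' G g → g '' G = G' →
      ∀ x x', x ∉ H.cl G → x' ∉ H'.cl G' →
        IsPartialEmb H H' (G ∪ {x}) (extend1 g x x')
  homog2 : ∀ H H' : QMModel L, C H → C H' →
    ∀ (G : Set H.carrier) (G' : Set H'.carrier) (g : H.carrier → H'.carrier),
      EmptyOrCtbleClosed H G → EmptyOrCtbleClosed H' G' →
      IsPartialEmb H H' G g → g '' G = G' →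
      ∀ (X : Set H.carrier) (h : H.carrier → H'.carrier),
        X.Finite → (∀ z ∈ G, h z = g z) → IsPartialEmb H H' (G ∪ X) h →
        ∀ y ∈ H.cl (X ∪ G), ∃ y', IsPartialEmb H H' ((G ∪ X) ∪ {y}) (extend1 h y y')

/-- Axiom III (excellence): quantifier-free types over countable crowns are
determined over finite subsets. -/
structure AxiomIII (C : QMModel L → Prop) : Prop where
  excellence : ∀ H H' : QMModel L, C H → C H' →
    ∀ (Cr : Set H.carrier) (g : H.carrier → H'.carrier),
      IsCrown H Cr → Cr.Countable → IsClosedPartialEmb H H' Cr g →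
      ∀ X : Finset H.carrier, ↑X ⊆ H.cl Cr →
        ∃ C₀ : Finset H.carrier, ↑C₀ ⊆ Cr ∧
          ∀ f : H.carrier → H'.carrier,
            IsPartialEmb H H' (↑X ∪ ↑C₀) (combine ↑X f g) →
            IsPartialEmb H H' (↑X ∪ Cr) (combine ↑X f g)

/-- A quasiminimal excellent class: a class of `L`-structures-with-pregeometries
satisfying axioms I, II and III. -/
structure IsQEC (C : QMModel L → Prop) : Prop where
  axI : AxiomI C
  axII : AxiomII C
  axIII : AxiomIII C

/-- Axiom IV: unions of (ordinal-indexed, i.e. well-ordered) chains of closed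
embeddings, with the union pregeometry, stay in the class; and the class has an
infinite-dimensional model. -/
structure AxiomIV (C : QMModel L → Prop) : Prop where
  chains : ∀ (ι : Type u) [LinearOrder ι] [WellFoundedLT ι],
    ∀ (H : QMModel L) (S : ι → L.Substructure H.carrier)
      (cls : ∀ i, Set ↥(S i) → Set ↥(S i))
      (hmono : ∀ i j : ι, i ≤ j → (S i : Set H.carrier) ⊆ (S j : Set H.carrier)),
      (⋃ i, (S i : Set H.carrier)) = Set.univ →
      (∀ i, C (H.substruct (S i) (cls i))) →
      (∀ (i j : ι) (hij : i ≤ j) (X : Set ↥(S i)), cls i X = X →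
        cls j ((fun x : ↥(S i) => (⟨x.1, hmono i j hij x.2⟩ : ↥(S j))) '' X) =
          (fun x : ↥(S i) => (⟨x.1, hmono i j hij x.2⟩ : ↥(S j))) '' X) →
      (∀ X : Set H.carrier,
        H.cl X = ⋃ i, Subtype.val '' cls i (Subtype.val ⁻¹' X)) →
      C H
  infDim : ∃ H, C H ∧ ∃ B : Set H.carrier, IsBasisOver H.cl ∅ B ∧ B.Infinite

/-- `C` is uncountably categorical: exactly one model of each uncountable
cardinality, up to isomorphism. -/
def UncountablyCategorical (C : QMModel L → Prop) : Prop :=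
  ∀ κ : Cardinal.{u}, ℵ₀ < κ →
    (∃ H, C H ∧ #H.carrier = κ) ∧
    ∀ H H', C H → C H' → #H.carrier = κ → #H'.carrier = κ →
      Nonempty (H.carrier ≃[L] H'.carrier)

/-- Tuples `x`, `y` have the same quantifier-free type over `G`. -/
def SameQfTypeOver (H : QMModel L) (G : Set H.carrier) {n : ℕ}
    (x y : Fin n → H.carrier) : Prop :=
  ∀ (k : ℕ) (φ : L.Formula (Fin n ⊕ Fin k)), φ.IsQF →
    ∀ c : Fin k → H.carrier, (∀ i, c i ∈ G) →
      (φ.Realize (Sum.elim x c) ↔ φ.Realize (Sum.elim y c))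

/-- The reduct of a model along a language map, keeping the same pregeometry. -/
def QMModel.reduct {L0 : FirstOrder.Language.{u, u}} (φ : L0 →ᴸ L) (M : QMModel L) :
    QMModel L0 :=
  { carrier := M.carrier, str := φ.reduct M.carrier, cl := M.cl }


open Set in
section
set_option linter.dupNamespace false
variable {α : Type*} {cl : Set α → Set α}


theorem IsPregeom.cl_countable (h : IsPregeom cl)
    (ccp : ∀ X : Set α, X.Finite → (cl X).Countable)
    {S : Set α} (hS : S.Countable) : (cl S).Countable := by
  have hsub : cl S ⊆ ⋃ t ∈ {t : Set α | t.Finite ∧ t ⊆ S}, cl t := by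
    intro y hy
    obtain ⟨X₀, hX₀, hyX₀⟩ := h.finChar S y hy
    exact mem_biUnion ⟨X₀.finite_toSet, hX₀⟩ hyX₀
  refine Set.Countable.mono hsub ?_
  exact Set.Countable.biUnion (Set.countable_setOf_finite_subset hS) fun t ht => ccp t ht.1

/-- Steinitz: a set independent over `Z` inside the closure of `Z ∪ X`, `X` finite,
is finite. -/
theorem IsPregeom.indep_finite (h : IsPregeom cl) :
    ∀ (X : Finset α) (Z S : Set α), (∀ s ∈ S, s ∉ cl (Z ∪ (S \ {s}))) →
      S ⊆ cl (Z ∪ ↑X) → S.Finite := by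
  classical
  intro X
  induction X using Finset.strongInduction with
  | _ X ih =>
  intro Z S hind hsub
  rcases S.eq_empty_or_nonempty with rfl | ⟨s, hs⟩
  · exact Set.finite_empty
  have hsZ : s ∉ cl Z := fun hc => hind s hs (h.mono subset_union_left hc)
  -- find a minimal `X₀ ⊆ X` with `s ∈ cl (Z ∪ X₀)`
  obtain ⟨X₀, hX₀mem, hX₀min⟩ :=
    Finset.exists_min_image
      (X.powerset.filter (fun Y : Finset α => s ∈ cl (Z ∪ (↑Y : Set α))))
      (fun Y : Finset α => Y.card) ⟨X, by simp [hsub hs]⟩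
  simp only [Finset.mem_filter, Finset.mem_powerset] at hX₀mem
  obtain ⟨hX₀X, hsX₀⟩ := hX₀mem
  rcases X₀.eq_empty_or_nonempty with rfl | ⟨x, hx⟩
  · exact absurd (by simpa using hsX₀) hsZ
  have hser : s ∉ cl (Z ∪ ↑(X₀.erase x)) := by
    intro hc
    have := hX₀min (X₀.erase x)
      (by simp only [Finset.mem_filter, Finset.mem_powerset]
          exact ⟨(X₀.erase_subset x).trans hX₀X, hc⟩)
    have := Finset.card_erase_lt_of_mem hx
    omega
  -- exchange: x ∈ cl (Z ∪ (X₀ \ {x}) ∪ {s})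
  have hxex : x ∈ cl ((Z ∪ ↑(X₀.erase x)) ∪ {s}) := by
    refine h.exchange _ s x ?_ hser
    refine h.mono ?_ hsX₀
    intro z hz
    rcases hz with hz | hz
    · exact Or.inl (Or.inl hz)
    · rcases eq_or_ne z x with rfl | hne
      · exact Or.inr rfl
      · exact Or.inl (Or.inr (by simpa [Finset.mem_erase, hne] using hz))
  -- hence S ⊆ cl ((Z ∪ {s}) ∪ (X.erase x))
  have hXsub : (↑X : Set α) ⊆ cl ((Z ∪ {s}) ∪ ↑(X.erase x)) := by
    intro z hz
    rcases eq_or_ne z x with rfl | hne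
    · refine h.mono ?_ hxex
      rintro w ((hw | hw) | hw)
      · exact Or.inl (Or.inl hw)
      · simp only [Finset.coe_erase, mem_diff, Finset.mem_coe, mem_singleton_iff] at hw
        exact Or.inr (by
          simp only [Finset.coe_erase, mem_diff, Finset.mem_coe, mem_singleton_iff]
          exact ⟨hX₀X hw.1, hw.2⟩)
      · exact Or.inl (Or.inr hw)
    · exact h.subset_cl _ (Or.inr (by simp [Finset.mem_erase, hne, hz]))
  have hS' : S ⊆ cl ((Z ∪ {s}) ∪ ↑(X.erase x)) := by
    intro t ht
    have h1 : t ∈ cl (Z ∪ ↑X) := hsub ht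
    have h2 : (Z ∪ ↑X : Set α) ⊆ cl ((Z ∪ {s}) ∪ ↑(X.erase x)) := by
      intro w hw
      rcases hw with hw | hw
      · exact h.subset_cl _ (Or.inl (Or.inl hw))
      · exact hXsub hw
    have h3 := h.mono h2 h1
    rwa [h.idem] at h3
  -- apply induction to S \ {s} over Z ∪ {s}
  have hxX : x ∈ X := hX₀X hx
  have hfin : (S \ {s}).Finite := by
    refine ih (X.erase x) (Finset.erase_ssubset hxX) (Z ∪ {s}) (S \ {s}) ?_
      (fun t ht => hS' ht.1)
    intro t ht hc
    refine hind t ht.1 ?_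
    have hsub2 : ((Z ∪ {s}) ∪ ((S \ {s}) \ {t})) ⊆ Z ∪ (S \ {t}) := by
      rintro w ((hw | hw) | hw)
      · exact Or.inl hw
      · simp only [mem_singleton_iff] at hw
        subst hw
        exact Or.inr ⟨hs, fun hc' => ht.2 (by simpa using hc'.symm)⟩
      · exact Or.inr ⟨hw.1.1, hw.2⟩
    exact h.mono hsub2 hc
  have : S = insert s (S \ {s}) := by
    ext t; simp only [mem_insert_iff, mem_diff, mem_singleton_iff]
    constructor
    · intro ht; rcases eq_or_ne t s with rfl | hne; exacts [Or.inl rfl, Or.inr ⟨ht, hne⟩]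
    · rintro (rfl | ⟨ht, _⟩); exacts [hs, ht]
  rw [this]
  exact hfin.insert s

end
open Set Function FirstOrder FirstOrder.Language in
section
set_option linter.dupNamespace false
universe v
variable {L : FirstOrder.Language.{v, v}} {H H' : QMModel L}

theorem IsPartialEmb.mono {D D' : Set H.carrier} {f : H.carrier → H'.carrier}
    (h : IsPartialEmb H H' D f) (hsub : D' ⊆ D) : IsPartialEmb H H' D' f :=
  ⟨h.1.mono hsub, fun n φ hφ a ha => h.2 n φ hφ a fun i => hsub (ha i)⟩

theorem IsPartialEmb.congr {D : Set H.carrier} {f f' : H.carrier → H'.carrier}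
    (h : IsPartialEmb H H' D f) (hff' : ∀ z ∈ D, f' z = f z) : IsPartialEmb H H' D f' := by
  constructor
  · intro x hx y hy hxy
    exact h.1 hx hy (by rw [← hff' x hx, ← hff' y hy, hxy])
  · intro n φ hφ a ha
    have : f' ∘ a = f ∘ a := funext fun i => hff' (a i) (ha i)
    rw [this]
    exact h.2 n φ hφ a ha

theorem isQF_realize_comp {D : Set H.carrier} {f : H.carrier → H'.carrier}
    (h : IsPartialEmb H H' D f) {n : ℕ} {φ : L.Formula (Fin n)} (hφ : φ.IsQF)
    {a : Fin n → H.carrier} (ha : ∀ i, a i ∈ D) :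
    φ.Realize a ↔ φ.Realize (f ∘ a) := h.2 n φ hφ a ha

/-- The inverse of a partial embedding. -/
theorem IsPartialEmb.inv [Nonempty H.carrier] {D : Set H.carrier}
    {f : H.carrier → H'.carrier} (h : IsPartialEmb H H' D f) :
    IsPartialEmb H' H (f '' D) (Function.invFunOn f D) := by
  have hleft : ∀ z ∈ D, Function.invFunOn f D (f z) = z := fun z hz =>
    h.1.leftInvOn_invFunOn hz
  constructor
  · rintro _ ⟨x, hx, rfl⟩ _ ⟨y, hy, rfl⟩ hxy
    rw [hleft x hx, hleft y hy] at hxy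
    rw [hxy]
  · intro n φ hφ b hb
    choose a haD hab using fun i => hb i
    have h1 : Function.invFunOn f D ∘ b = a := funext fun i => by
      show Function.invFunOn f D (b i) = a i
      rw [← hab i, hleft (a i) (haD i)]
    have h2 : b = f ∘ a := funext fun i => (hab i).symm
    rw [h1, h2]
    exact (h.2 n φ hφ a haD).symm

/-- An `L`-embedding is a partial embedding on any set. -/
theorem embedding_isPartialEmb (f : H.carrier ↪[L] H'.carrier) (D : Set H.carrier) :
    IsPartialEmb H H' D ⇑f := by
  refine ⟨f.injective.injOn, ?_⟩
  intro n φ hφ a _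
  induction hφ with
  | falsum => simp [Formula.Realize, BoundedFormula.Realize]
  | of_isAtomic hat =>
    cases hat with
    | equal t₁ t₂ =>
      have he : ∀ (v : Fin n → H.carrier) (t : L.Term (Fin n ⊕ Fin 0)),
          t.realize (Sum.elim (⇑f ∘ v) default) = f (t.realize (Sum.elim v default)) := by
        intro v t
        have : Sum.elim (⇑f ∘ v) (default : Fin 0 → H'.carrier) = ⇑f ∘ Sum.elim v default :=
          funext fun i => by cases i with
            | inl i => rfl
            | inr i => exact i.elim0
        rw [this, HomClass.realize_term]
      simp only [Formula.Realize, BoundedFormula.realize_bdEqual, he]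
      exact ⟨fun hh => by rw [hh], fun hh => f.injective hh⟩
    | rel R ts =>
      have he : ∀ (v : Fin n → H.carrier) (t : L.Term (Fin n ⊕ Fin 0)),
          t.realize (Sum.elim (⇑f ∘ v) default) = f (t.realize (Sum.elim v default)) := by
        intro v t
        have : Sum.elim (⇑f ∘ v) (default : Fin 0 → H'.carrier) = ⇑f ∘ Sum.elim v default :=
          funext fun i => by cases i with
            | inl i => rfl
            | inr i => exact i.elim0
        rw [this, HomClass.realize_term]
      simp only [Formula.Realize, BoundedFormula.realize_rel, he]
      exact (StrongHomClass.map_rel f R _).symm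
  | imp h₁ h₂ ih₁ ih₂ =>
    simp only [Formula.Realize, BoundedFormula.realize_imp] at *
    rw [ih₁, ih₂]

theorem BoundedFormula.IsQF.toFormula' {α : Type*} {n : ℕ} {φ : L.BoundedFormula α n}
    (h : φ.IsQF) : φ.toFormula.IsQF := by
  induction h with
  | falsum => exact BoundedFormula.IsQF.falsum
  | of_isAtomic hat =>
    cases hat with
    | equal t₁ t₂ => exact (BoundedFormula.IsAtomic.equal _ _).isQF
    | rel R ts => exact (BoundedFormula.IsAtomic.rel _ _).isQF
  | imp h₁ h₂ ih₁ ih₂ => exact ih₁.imp ih₂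

/-- Partial embeddings preserve quantifier-free bounded formulas. -/
theorem IsPartialEmb.realize_boundedFormula {D : Set H.carrier}
    {g : H.carrier → H'.carrier} (h : IsPartialEmb H H' D g) {n k : ℕ}
    {φ : L.BoundedFormula (Fin n) k} (hφ : φ.IsQF) {v : Fin n → H.carrier}
    {xs : Fin k → H.carrier} (hv : ∀ i, v i ∈ D) (hxs : ∀ i, xs i ∈ D) :
    φ.Realize v xs ↔ φ.Realize (g ∘ v) (g ∘ xs) := by
  classical
  set e := finSumFinEquiv (m := n) (n := k)
  set ψ : L.Formula (Fin (n + k)) := φ.toFormula.relabel ⇑e with hψ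
  have hψqf : ψ.IsQF := by
    have := (BoundedFormula.IsQF.toFormula' hφ).relabel
      (Sum.inl ∘ ⇑e : (Fin n ⊕ Fin k) → Fin (n + k) ⊕ Fin 0)
    exact this
  have key : ∀ (w : Fin n → H.carrier) (ys : Fin k → H.carrier),
      ψ.Realize (Sum.elim w ys ∘ e.symm) ↔ φ.Realize w ys := by
    intro w ys
    rw [hψ, Formula.realize_relabel]
    have : (Sum.elim w ys ∘ ⇑e.symm) ∘ ⇑e = Sum.elim w ys :=
      funext fun i => by simp
    rw [this, BoundedFormula.realize_toFormula]
    exact iff_of_eq (congrArg₂ _ rfl rfl)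
  have hmem : ∀ i, (Sum.elim v xs ∘ e.symm) i ∈ D := by
    intro i
    rcases hi : e.symm i with j | j
    · simpa [hi] using hv j
    · simpa [hi] using hxs j
  have key' : ∀ (w : Fin n → H'.carrier) (ys : Fin k → H'.carrier),
      ψ.Realize (Sum.elim w ys ∘ e.symm) ↔ φ.Realize w ys := by
    intro w ys
    rw [hψ, Formula.realize_relabel]
    have : (Sum.elim w ys ∘ ⇑e.symm) ∘ ⇑e = Sum.elim w ys :=
      funext fun i => by simp
    rw [this, BoundedFormula.realize_toFormula]
    exact iff_of_eq (congrArg₂ _ rfl rfl)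
  have hmain := h.2 (n + k) ψ hψqf (Sum.elim v xs ∘ e.symm) hmem
  rw [key v xs] at hmain
  rw [hmain]
  have hcomp : g ∘ Sum.elim v xs ∘ ⇑e.symm = Sum.elim (g ∘ v) (g ∘ xs) ∘ ⇑e.symm :=
    funext fun i => by rcases hi : e.symm i with j | j <;> simp [hi]
  rw [hcomp, key' (g ∘ v) (g ∘ xs)]

end
open Set Function FirstOrder FirstOrder.Language in
section
set_option linter.dupNamespace false
universe v
variable {L : FirstOrder.Language.{v, v}}

theorem extend1_self {α β : Type*} (f : α → β) (y : α) (y' : β) : extend1 f y y' y = y' :=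
  by simp [extend1]

theorem extend1_of_ne {α β : Type*} (f : α → β) (y : α) (y' : β) {z : α} (hz : z ≠ y) :
    extend1 f y y' z = f z := by simp [extend1, hz]

/-- The system of good finite-dimensional partial isomorphisms. -/
def Sys (M N : QMModel L) (h : M.carrier → N.carrier) (X : Finset M.carrier) : Prop :=
  IsPartialEmb M N (M.cl ↑X) h ∧ h '' (M.cl ↑X) = N.cl (h '' ↑X)

/-- Invariant of a stage in the zig-zag construction. -/
def StageInv (M N : QMModel L) (g : M.carrier → N.carrier) (G A : Set M.carrier)
    (B : Set N.carrier) (x : M.carrier) (x' : N.carrier)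
    (p : (M.carrier → N.carrier) × Finset M.carrier) : Prop :=
  (↑p.2 ⊆ A) ∧ (x ∈ p.2) ∧ (∀ z ∈ G, p.1 z = g z) ∧ p.1 x = x' ∧
    IsPartialEmb M N (G ∪ ↑p.2) p.1 ∧ (p.1 '' ↑p.2 ⊆ B)

/-- Extension order on stages. -/
def StageLe {M N : QMModel L} (G : Set M.carrier)
    (p q : (M.carrier → N.carrier) × Finset M.carrier) : Prop :=
  p.2 ⊆ q.2 ∧ ∀ z ∈ G ∪ ↑p.2, q.1 z = p.1 z

theorem StageLe.rfl {M N : QMModel L} (G : Set M.carrier)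
    (p : (M.carrier → N.carrier) × Finset M.carrier) : StageLe G p p :=
  ⟨Finset.Subset.refl _, fun _ _ => Eq.refl _⟩

theorem StageLe.trans {M N : QMModel L} {G : Set M.carrier}
    {p q r : (M.carrier → N.carrier) × Finset M.carrier}
    (h1 : StageLe G p q) (h2 : StageLe G q r) : StageLe G p r :=
  ⟨h1.1.trans h2.1, fun z hz => ((h2.2 z (Set.union_subset_union_right G
    (by exact_mod_cast Finset.coe_subset.2 h1.1) hz)).trans (h1.2 z hz))⟩

section Ext
variable {C : QMModel L → Prop} {M N : QMModel L}
variable {g : M.carrier → N.carrier} {X : Finset M.carrier} {x : M.carrier} {x' : N.carrier}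

/-- Forward step of the zig-zag. -/
theorem ext_step_fwd [Nonempty M.carrier] [Nonempty N.carrier] [DecidableEq M.carrier]
    (hC : IsQEC C) (hM : C M) (hN : C N)
    (hg : Sys M N g X) (hx : x ∉ M.cl ↑X)
    (p : (M.carrier → N.carrier) × Finset M.carrier)
    (hp : StageInv M N g (M.cl ↑X) (M.cl ↑(insert x X)) (N.cl (insert x' (g '' ↑X))) x x' p)
    (a : M.carrier) (ha : a ∈ M.cl ↑(insert x X)) :
    ∃ q, StageInv M N g (M.cl ↑X) (M.cl ↑(insert x X)) (N.cl (insert x' (g '' ↑X))) x x' q ∧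
      StageLe (M.cl ↑X) p q ∧ a ∈ M.cl ↑X ∪ ↑q.2 := by
  classical
  obtain ⟨h, D⟩ := p
  obtain ⟨hDA, hxD, hhG, hhx, hPE, himB⟩ := hp
  dsimp only at hDA hxD hhG hhx hPE himB
  set G : Set M.carrier := M.cl ↑X with hGdef
  by_cases haGD : a ∈ G ∪ ↑D
  · exact ⟨(h, D), ⟨hDA, hxD, hhG, hhx, hPE, himB⟩, StageLe.rfl _ _, haGD⟩
  have pM := hC.axI.pregeom M hM
  have pN := hC.axI.pregeom N hN
  have hGc : M.cl G = G := pM.idem _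
  have hGcnt : G.Countable := hC.axI.ccp M hM _ X.finite_toSet
  have hG'eq : g '' G = N.cl (g '' ↑X) := hg.2
  have hG'c : N.cl (g '' G) = g '' G := by rw [hG'eq]; exact pN.idem _
  have hG'cnt : (g '' G).Countable := by
    rw [hG'eq]; exact hC.axI.ccp N hN _ (X.finite_toSet.image g)
  have hEG : EmptyOrCtbleClosed M G := Or.inr ⟨hGcnt, hGc⟩
  have hEG' : EmptyOrCtbleClosed N (g '' G) := Or.inr ⟨hG'cnt, hG'c⟩
  have hXsubG : (↑X : Set M.carrier) ⊆ G := pM.subset_cl _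
  have hacl : a ∈ M.cl (↑D ∪ G) := by
    refine pM.mono ?_ ha
    rw [Finset.coe_insert]
    exact Set.insert_subset (Or.inl hxD) (hXsubG.trans Set.subset_union_right)
  obtain ⟨y', hy'⟩ := hC.axII.homog2 M N hM hN G (g '' G) g hEG hEG' hg.1 rfl
    ↑D h D.finite_toSet hhG hPE a hacl
  have haG : a ∉ G := fun hc => haGD (Or.inl hc)
  have haD : a ∉ (↑D : Set M.carrier) := fun hc => haGD (Or.inr hc)
  have hxa : x ≠ a := fun hc => haD (hc ▸ hxD)
  have hza : ∀ z ∈ G ∪ (↑D : Set M.carrier), z ≠ a := fun z hz hc => haGD (hc ▸ hz)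
  refine ⟨(extend1 h a y', insert a D), ⟨?_, ?_, ?_, ?_, ?_, ?_⟩, ⟨?_, ?_⟩, ?_⟩ <;> dsimp only
  · rw [Finset.coe_insert]
    exact Set.insert_subset ha hDA
  · exact Finset.mem_insert_of_mem hxD
  · intro z hz
    rw [extend1_of_ne h a y' (hza z (Or.inl hz))]
    exact hhG z hz
  · rw [extend1_of_ne h a y' (hza x (Or.inr hxD))]; exact hhx
  · refine IsPartialEmb.mono hy' (subset_of_eq ?_)
    rw [Finset.coe_insert, Set.union_insert, Set.union_singleton]
  · rintro _ ⟨z, hz, rfl⟩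
    rw [Finset.coe_insert, Set.mem_insert_iff] at hz
    rcases hz with hz | hz
    · subst hz
      rw [extend1_self]
      have hsub : (↑(insert x X) : Set M.carrier) ⊆ (G ∪ ↑D) ∪ {z} := by
        rw [Finset.coe_insert]
        exact Set.insert_subset (Or.inl (Or.inr hxD))
          (fun w hw => Or.inl (Or.inl (hXsubG hw)))
      have hkey := hC.axI.clPreserved M N hM hN ((G ∪ ↑D) ∪ {z}) (extend1 h z y') hy'
        ↑(insert x X) hsub z ha (Or.inr rfl)
      have himg : extend1 h z y' '' ↑(insert x X) = insert x' (g '' ↑X) := by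
        rw [Finset.coe_insert, Set.image_insert_eq,
          extend1_of_ne h z y' (hza x (Or.inr hxD)), hhx]
        congr 1
        refine Set.image_congr fun w hw => ?_
        rw [extend1_of_ne h z y' (hza w (Or.inl (hXsubG hw)))]
        exact hhG w (hXsubG hw)
      rwa [himg, extend1_self] at hkey
    · rw [extend1_of_ne h a y' (hza z (Or.inr hz))]
      exact himB ⟨z, hz, rfl⟩
  · exact Finset.subset_insert a D
  · intro z hz
    exact extend1_of_ne h a y' (hza z hz)
  · exact Or.inr (Finset.mem_insert_self a D)

/-- Backward step of the zig-zag. -/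
theorem ext_step_bwd [Nonempty M.carrier] [Nonempty N.carrier] [DecidableEq M.carrier]
    (hC : IsQEC C) (hM : C M) (hN : C N)
    (hg : Sys M N g X) (hx : x ∉ M.cl ↑X)
    (p : (M.carrier → N.carrier) × Finset M.carrier)
    (hp : StageInv M N g (M.cl ↑X) (M.cl ↑(insert x X)) (N.cl (insert x' (g '' ↑X))) x x' p)
    (b : N.carrier) (hb : b ∈ N.cl (insert x' (g '' ↑X))) :
    ∃ q, StageInv M N g (M.cl ↑X) (M.cl ↑(insert x X)) (N.cl (insert x' (g '' ↑X))) x x' q ∧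
      StageLe (M.cl ↑X) p q ∧ b ∈ q.1 '' (M.cl ↑X ∪ ↑q.2) := by
  classical
  obtain ⟨h, D⟩ := p
  obtain ⟨hDA, hxD, hhG, hhx, hPE, himB⟩ := hp
  dsimp only at hDA hxD hhG hhx hPE himB
  set G : Set M.carrier := M.cl ↑X with hGdef
  by_cases hbim : b ∈ h '' (G ∪ ↑D)
  · exact ⟨(h, D), ⟨hDA, hxD, hhG, hhx, hPE, himB⟩, StageLe.rfl _ _, hbim⟩
  have pM := hC.axI.pregeom M hM
  have pN := hC.axI.pregeom N hN
  have hGc : M.cl G = G := pM.idem _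
  have hGcnt : G.Countable := hC.axI.ccp M hM _ X.finite_toSet
  have hG'eq : g '' G = N.cl (g '' ↑X) := hg.2
  have hG'c : N.cl (g '' G) = g '' G := by rw [hG'eq]; exact pN.idem _
  have hG'cnt : (g '' G).Countable := by
    rw [hG'eq]; exact hC.axI.ccp N hN _ (X.finite_toSet.image g)
  have hEG : EmptyOrCtbleClosed M G := Or.inr ⟨hGcnt, hGc⟩
  have hEG' : EmptyOrCtbleClosed N (g '' G) := Or.inr ⟨hG'cnt, hG'c⟩
  have hXsubG : (↑X : Set M.carrier) ⊆ G := pM.subset_cl _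
  have hinj : Set.InjOn h (G ∪ ↑D) := hPE.1
  set hi : N.carrier → M.carrier := Function.invFunOn h (G ∪ ↑D) with hidef
  have hInv : IsPartialEmb N M (h '' (G ∪ ↑D)) hi := hPE.inv
  have himGD : h '' (G ∪ ↑D) = g '' G ∪ h '' ↑D := by
    rw [Set.image_union]
    congr 1
    exact Set.image_congr hhG
  have ginvPE : IsPartialEmb N M (g '' G) (Function.invFunOn g G) := hg.1.inv
  have hginvim : Function.invFunOn g G '' (g '' G) = G :=
    hg.1.1.invFunOn_image subset_rfl
  have hagreeInv : ∀ w ∈ g '' G, hi w = Function.invFunOn g G w := by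
    rintro _ ⟨z, hz, rfl⟩
    rw [show g z = h z from (hhG z hz).symm, hidef,
      hinj.leftInvOn_invFunOn (Or.inl hz : z ∈ G ∪ ↑D)]
    rw [show h z = g z from hhG z hz, hg.1.1.leftInvOn_invFunOn hz]
  have hbcl : b ∈ N.cl (h '' ↑D ∪ g '' G) := by
    refine pN.mono ?_ hb
    refine Set.insert_subset (Or.inl ⟨x, hxD, hhx⟩) ?_
    exact (Set.image_mono (f := g) hXsubG).trans Set.subset_union_right
  have hIPE : IsPartialEmb N M (g '' G ∪ h '' ↑D) hi := by
    rw [← himGD]; exact hInv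
  obtain ⟨a, hA1⟩ := hC.axII.homog2 N M hN hM (g '' G) G (Function.invFunOn g G)
    hEG' hEG ginvPE hginvim (h '' ↑D) hi (D.finite_toSet.image h) hagreeInv hIPE b hbcl
  have hbnotin : b ∉ g '' G ∪ h '' ↑D := by rw [← himGD]; exact hbim
  have hne : ∀ w ∈ g '' G ∪ h '' ↑D, w ≠ b := fun w hw hc => hbnotin (hc ▸ hw)
  set e : N.carrier → M.carrier := extend1 hi b a with hedef
  have hx'mem : x' ∈ g '' G ∪ h '' ↑D := Or.inr ⟨x, hxD, hhx⟩
  have hex' : e x' = x := by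
    rw [hedef, extend1_of_ne hi b a (hne x' hx'mem), ← hhx, hidef,
      hinj.leftInvOn_invFunOn (Or.inr hxD : x ∈ G ∪ ↑D)]
  have hegX : ∀ z ∈ (↑X : Set M.carrier), e (g z) = z := by
    intro z hz
    have hmem : g z ∈ g '' G ∪ h '' ↑D := Or.inl ⟨z, hXsubG hz, rfl⟩
    rw [hedef, extend1_of_ne hi b a (hne _ hmem), show g z = h z from (hhG z (hXsubG hz)).symm,
      hidef, hinj.leftInvOn_invFunOn (Or.inl (hXsubG hz) : z ∈ G ∪ ↑D)]
  have haA : a ∈ M.cl ↑(insert x X) := by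
    have hsub : insert x' (g '' ↑X) ⊆ (g '' G ∪ h '' ↑D) ∪ {b} := by
      refine Set.insert_subset (Or.inl hx'mem) ?_
      exact fun w hw => Or.inl (Or.inl ((Set.image_mono (f := g) hXsubG) hw))
    have hkey := hC.axI.clPreserved N M hN hM ((g '' G ∪ h '' ↑D) ∪ {b}) e hA1
      (insert x' (g '' ↑X)) hsub b hb (Or.inr rfl)
    have himg : e '' insert x' (g '' ↑X) = ↑(insert x X) := by
      rw [Set.image_insert_eq, hex', Finset.coe_insert]
      congr 1
      rw [Set.image_image]
      exact (Set.image_congr hegX).trans (Set.image_id _)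
    rw [himg] at hkey
    have : e b = a := extend1_self _ _ _
    rwa [this] at hkey
  have hanot : a ∉ G ∪ ↑D := by
    intro hc
    have h1 : h a ∈ g '' G ∪ h '' ↑D := by rw [← himGD]; exact ⟨a, hc, rfl⟩
    have hne' : h a ≠ b := hne _ h1
    have e1 : e (h a) = a := by
      rw [hedef, extend1_of_ne hi b a hne', hidef, hinj.leftInvOn_invFunOn hc]
    have e2 : e b = a := extend1_self _ _ _
    exact hne' (hA1.1 (Or.inl h1) (Or.inr rfl) (e1.trans e2.symm))
  have hza : ∀ z ∈ G ∪ (↑D : Set M.carrier), z ≠ a := fun z hz hc => hanot (hc ▸ hz)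
  have hxa : x ≠ a := hza x (Or.inr hxD)
  -- the new partial embedding
  set S' : Set N.carrier := (g '' G ∪ h '' ↑D) ∪ {b} with hS'def
  have himg2 : e '' S' = (G ∪ ↑D) ∪ {a} := by
    have hebv : e b = a := extend1_self _ _ _
    rw [hS'def, Set.image_union, Set.image_singleton, hebv]
    congr 1
    have h1 : e '' (g '' G ∪ h '' ↑D) = hi '' (g '' G ∪ h '' ↑D) :=
      Set.image_congr fun w hw => by rw [hedef, extend1_of_ne hi b a (hne w hw)]
    rw [h1, ← himGD, hidef]
    exact hinj.invFunOn_image subset_rfl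
  have hinv2 := hA1.inv
  rw [himg2] at hinv2
  have hq : ∀ w ∈ (G ∪ ↑D) ∪ ({a} : Set M.carrier),
      extend1 h a b w = Function.invFunOn e S' w := by
    intro w hw
    rcases hw with hw | hw
    · have hwa : w ≠ a := hza w hw
      have hhwS : h w ∈ S' := Or.inl (by rw [← himGD]; exact ⟨w, hw, rfl⟩)
      have hehw : e (h w) = w := by
        rw [hedef, extend1_of_ne hi b a (hne _ (by rw [← himGD]; exact ⟨w, hw, rfl⟩)),
          hidef, hinj.leftInvOn_invFunOn hw]
      have hwit : ∃ s ∈ S', e s = w := ⟨h w, hhwS, hehw⟩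
      have h1 : e (Function.invFunOn e S' w) = w := Function.invFunOn_eq hwit
      have h2 : Function.invFunOn e S' w ∈ S' := Function.invFunOn_mem hwit
      have := hA1.1 h2 hhwS (h1.trans hehw.symm)
      rw [extend1_of_ne h a b hwa, ← this]
    · rw [Set.mem_singleton_iff] at hw
      subst hw
      have heb : e b = w := extend1_self _ _ _
      have hwit : ∃ s ∈ S', e s = w := ⟨b, Or.inr rfl, heb⟩
      have h1 : e (Function.invFunOn e S' w) = w := Function.invFunOn_eq hwit
      have h2 : Function.invFunOn e S' w ∈ S' := Function.invFunOn_mem hwit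
      have := hA1.1 h2 (Or.inr rfl : b ∈ S') (h1.trans heb.symm)
      rw [extend1_self, ← this]
  have hPE2 : IsPartialEmb M N ((G ∪ ↑D) ∪ {a}) (extend1 h a b) :=
    IsPartialEmb.congr hinv2 hq
  refine ⟨(extend1 h a b, insert a D), ⟨?_, ?_, ?_, ?_, ?_, ?_⟩, ⟨?_, ?_⟩, ?_⟩ <;> dsimp only
  · rw [Finset.coe_insert]
    exact Set.insert_subset haA hDA
  · exact Finset.mem_insert_of_mem hxD
  · intro z hz
    rw [extend1_of_ne h a b (hza z (Or.inl hz))]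
    exact hhG z hz
  · rw [extend1_of_ne h a b hxa]; exact hhx
  · refine IsPartialEmb.mono hPE2 (subset_of_eq ?_)
    rw [Finset.coe_insert, Set.union_insert, Set.union_singleton]
  · rintro _ ⟨z, hz, rfl⟩
    rw [Finset.coe_insert, Set.mem_insert_iff] at hz
    rcases hz with hz | hz
    · subst hz
      rw [extend1_self]
      exact hb
    · rw [extend1_of_ne h a b (hza z (Or.inr hz))]
      exact himB ⟨z, hz, rfl⟩
  · exact Finset.subset_insert a D
  · intro z hz
    exact extend1_of_ne h a b (hza z hz)
  · exact ⟨a, Or.inr (Finset.mem_insert_self a D), extend1_self _ _ _⟩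

end Ext
end
open Set Function FirstOrder FirstOrder.Language in
section
set_option linter.dupNamespace false
set_option linter.unusedVariables false
universe v
variable {L : FirstOrder.Language.{v, v}}
variable {C : QMModel L → Prop} {M N : QMModel L}
variable {g : M.carrier → N.carrier} {X : Finset M.carrier} {x : M.carrier} {x' : N.carrier}

/-- The limit of the zig-zag construction: one-step extension of a good
partial isomorphism. -/
theorem ext_lemma [Nonempty M.carrier] [Nonempty N.carrier] [DecidableEq M.carrier]
    (hC : IsQEC C) (hM : C M) (hN : C N)
    (hg : Sys M N g X) (hx : x ∉ M.cl ↑X)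
    (hg1 : IsPartialEmb M N (M.cl ↑X ∪ {x}) (extend1 g x x')) :
    ∃ h : M.carrier → N.carrier, Sys M N h (insert x X) ∧
      (∀ z ∈ M.cl ↑X, h z = g z) ∧ h x = x' := by
  classical
  have pM := hC.axI.pregeom M hM
  have pN := hC.axI.pregeom N hN
  set G : Set M.carrier := M.cl ↑X with hGdef
  set A : Set M.carrier := M.cl ↑(insert x X) with hAdef
  set B : Set N.carrier := N.cl (insert x' (g '' ↑X)) with hBdef
  have hXsubG : (↑X : Set M.carrier) ⊆ G := pM.subset_cl _
  have hxA : x ∈ A := pM.subset_cl _ (by rw [Finset.coe_insert]; exact Set.mem_insert _ _)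
  have hGA : G ⊆ A := by
    rw [hGdef, hAdef]
    refine pM.mono ?_
    rw [Finset.coe_insert]
    exact Set.subset_insert _ _
  have hx'B : x' ∈ B := pN.subset_cl _ (Set.mem_insert _ _)
  have hAcnt : A.Countable := hC.axI.ccp M hM _ (Finset.finite_toSet _)
  have hBcnt : B.Countable := hC.axI.ccp N hN _ ((X.finite_toSet.image g).insert x')
  obtain ⟨aseq, hA⟩ := hAcnt.exists_eq_range ⟨x, hxA⟩
  obtain ⟨bseq, hB⟩ := hBcnt.exists_eq_range ⟨x', hx'B⟩
  -- the base stage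
  have hp0 : StageInv M N g G A B x x' (extend1 g x x', {x}) := by
    refine ⟨?_, Finset.mem_singleton_self x, ?_, extend1_self _ _ _, ?_, ?_⟩ <;> dsimp only
    · rw [Finset.coe_singleton]
      exact Set.singleton_subset_iff.2 hxA
    · intro z hz
      exact extend1_of_ne g x x' (fun hc => hx (hc ▸ hz))
    · refine hg1.mono (subset_of_eq ?_)
      rw [Finset.coe_singleton]
    · rw [Finset.coe_singleton, Set.image_singleton, extend1_self]
      exact Set.singleton_subset_iff.2 hx'B
  -- the combined step
  have stepAB : ∀ p, StageInv M N g G A B x x' p → ∀ n : ℕ,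
      ∃ q, StageInv M N g G A B x x' q ∧ StageLe G p q ∧
        aseq n ∈ G ∪ ↑q.2 ∧ bseq n ∈ q.1 '' (G ∪ ↑q.2) := by
    intro p hp n
    have han : aseq n ∈ A := by rw [hA]; exact Set.mem_range_self n
    have hbn : bseq n ∈ B := by rw [hB]; exact Set.mem_range_self n
    obtain ⟨q1, hq1, hle1, ha1⟩ := ext_step_fwd hC hM hN hg hx p hp (aseq n) han
    obtain ⟨q2, hq2, hle2, hb2⟩ := ext_step_bwd hC hM hN hg hx q1 hq1 (bseq n) hbn
    refine ⟨q2, hq2, hle1.trans hle2, ?_, hb2⟩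
    rcases ha1 with h1 | h1
    · exact Or.inl h1
    · exact Or.inr (hle2.1 h1)
  choose stepF hInv' hLe' hA' hB' using stepAB
  let seq : ℕ → {p // StageInv M N g G A B x x' p} :=
    fun n => Nat.rec ⟨(extend1 g x x', {x}), hp0⟩
      (fun n ih => ⟨stepF ih.1 ih.2 n, hInv' ih.1 ih.2 n⟩) n
  have hseqs : ∀ n : ℕ, (seq (n + 1)).1 = stepF (seq n).1 (seq n).2 n := fun n => rfl
  have hLe1 : ∀ n, StageLe G (seq n).1 (seq (n + 1)).1 := by
    intro n
    rw [hseqs n]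
    exact hLe' (seq n).1 (seq n).2 n
  have hLe : ∀ m n, m ≤ n → StageLe G (seq m).1 (seq n).1 := by
    intro m n hmn
    induction n, hmn using Nat.le_induction with
    | base => exact StageLe.rfl _ _
    | succ n hmn ih => exact ih.trans (hLe1 n)
  have hexfun : ∀ z ∈ A, ∃ n, z ∈ G ∪ ↑((seq n).1.2) := by
    intro z hz
    rw [hA] at hz
    obtain ⟨k, rfl⟩ := hz
    refine ⟨k + 1, ?_⟩
    have := hA' (seq k).1 (seq k).2 k
    rwa [← hseqs k] at this
  set hw : M.carrier → N.carrier := fun z =>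
    if hz : ∃ n, z ∈ G ∪ ↑((seq n).1.2) then (seq (Nat.find hz)).1.1 z else g z with hwdef
  have hagree : ∀ n, ∀ z ∈ G ∪ (↑((seq n).1.2) : Set M.carrier), hw z = (seq n).1.1 z := by
    intro n z hz
    have hzex : ∃ m, z ∈ G ∪ ↑((seq m).1.2) := ⟨n, hz⟩
    rw [hwdef]
    simp only [dif_pos hzex]
    have hfind : Nat.find hzex ≤ n := Nat.find_min' hzex hz
    exact ((hLe _ n hfind).2 z (Nat.find_spec hzex)).symm
  have hmemmono : ∀ m n, m ≤ n → ∀ z : M.carrier,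
      z ∈ G ∪ (↑((seq m).1.2) : Set M.carrier) → z ∈ G ∪ ↑((seq n).1.2) := by
    intro m n hmn z hz
    rcases hz with hz | hz
    · exact Or.inl hz
    · exact Or.inr ((hLe m n hmn).1 hz)
  -- the limit is a partial embedding on A
  have hsubA : ∀ n, G ∪ (↑((seq n).1.2) : Set M.carrier) ⊆ A := by
    intro n
    exact Set.union_subset hGA (seq n).2.1
  have hPEA : IsPartialEmb M N A hw := by
    constructor
    · intro z hz w hw' hzw
      obtain ⟨m, hm⟩ := hexfun z hz
      obtain ⟨n, hn⟩ := hexfun w hw'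
      have hzk : z ∈ G ∪ ↑((seq (max m n)).1.2) := hmemmono m _ (le_max_left m n) z hm
      have hwk : w ∈ G ∪ ↑((seq (max m n)).1.2) := hmemmono n _ (le_max_right m n) w hn
      have h1 := hagree (max m n) z hzk
      have h2 := hagree (max m n) w hwk
      exact (seq (max m n)).2.2.2.2.2.1.1 hzk hwk (by rw [← h1, ← h2, hzw])
    · intro n φ hφ a ha
      choose ms hms using fun i => hexfun (a i) (ha i)
      set m := Finset.univ.sup ms with hmdef
      have hmem : ∀ i, a i ∈ G ∪ (↑((seq m).1.2) : Set M.carrier) := fun i =>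
        hmemmono (ms i) m (Finset.le_sup (Finset.mem_univ i)) _ (hms i)
      have hcomp : hw ∘ a = (seq m).1.1 ∘ a := funext fun i => hagree m (a i) (hmem i)
      rw [hcomp]
      exact (seq m).2.2.2.2.2.1.2 n φ hφ a hmem
  -- the image of the limit is B
  have himB : hw '' A = B := by
    apply Set.Subset.antisymm
    · rintro _ ⟨z, hz, rfl⟩
      obtain ⟨n, hzn⟩ := hexfun z hz
      rw [hagree n z hzn]
      rcases hzn with hzG | hzD
      · rw [(seq n).2.2.2.1 z hzG]
        have : g z ∈ g '' G := ⟨z, hzG, rfl⟩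
        rw [hg.2] at this
        exact pN.mono (Set.subset_insert _ _) this
      · exact (seq n).2.2.2.2.2.2 ⟨z, hzD, rfl⟩
    · intro b hb
      rw [hB] at hb
      obtain ⟨k, rfl⟩ := hb
      have hb' := hB' (seq k).1 (seq k).2 k
      rw [← hseqs k] at hb'
      obtain ⟨w, hwmem, hweq⟩ := hb'
      exact ⟨w, hsubA (k + 1) hwmem, by rw [hagree (k + 1) w hwmem]; exact hweq⟩
  have hwG : ∀ z ∈ G, hw z = g z := by
    intro z hz
    rw [hagree 0 z (Or.inl hz)]
    exact (seq 0).2.2.2.1 z hz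
  have hwx : hw x = x' := by
    rw [hagree 0 x (Or.inr (by exact_mod_cast (seq 0).2.2.1))]
    exact (seq 0).2.2.2.2.1
  refine ⟨hw, ⟨hPEA, ?_⟩, hwG, hwx⟩
  rw [himB]
  have : hw '' ↑(insert x X) = insert x' (g '' ↑X) := by
    rw [Finset.coe_insert, Set.image_insert_eq, hwx]
    congr 1
    exact Set.image_congr fun z hz => hwG z (hXsubG hz)
  rw [this]
end
open Set Function FirstOrder FirstOrder.Language in
section
set_option linter.dupNamespace false
set_option linter.unusedVariables false
universe v
variable {L : FirstOrder.Language.{v, v}}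
variable {C : QMModel L → Prop} {M N : QMModel L}

theorem exists_notin_cl {H : QMModel L} (pH : IsPregeom H.cl) {B : Set H.carrier}
    (hBind : ∀ b ∈ B, b ∉ H.cl (B \ {b})) (hBinf : B.Infinite)
    (X : Finset H.carrier) : ∃ y, y ∉ H.cl ↑X := by
  by_contra hcon
  push_neg at hcon
  refine hBinf (pH.indep_finite X ∅ B ?_ ?_)
  · intro s hs
    rw [Set.empty_union]
    exact hBind s hs
  · intro s _
    rw [Set.empty_union]
    exact hcon s

theorem sys_forth [Nonempty M.carrier] [Nonempty N.carrier]
    [DecidableEq M.carrier] [DecidableEq N.carrier]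
    (hC : IsQEC C) (hM : C M) (hN : C N)
    (hNbig : ∀ Y : Finset N.carrier, ∃ y', y' ∉ N.cl ↑Y)
    {g : M.carrier → N.carrier} {X : Finset M.carrier} (hg : Sys M N g X)
    (x : M.carrier) :
    ∃ (h : M.carrier → N.carrier) (X' : Finset M.carrier), Sys M N h X' ∧ X ⊆ X' ∧
      x ∈ M.cl ↑X' ∧ ∀ z ∈ M.cl ↑X, h z = g z := by
  classical
  have pM := hC.axI.pregeom M hM
  have pN := hC.axI.pregeom N hN
  by_cases hx : x ∈ M.cl ↑X
  · have hcleq : M.cl ↑(insert x X) = M.cl ↑X := by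
      apply Set.Subset.antisymm
      · have h1 : (↑(insert x X) : Set M.carrier) ⊆ M.cl ↑X := by
          rw [Finset.coe_insert]
          exact Set.insert_subset hx (pM.subset_cl _)
        have := pM.mono h1
        rwa [pM.idem] at this
      · refine pM.mono ?_
        rw [Finset.coe_insert]
        exact Set.subset_insert _ _
    refine ⟨g, insert x X, ⟨?_, ?_⟩, Finset.subset_insert _ _, pM.subset_cl _
      (by rw [Finset.coe_insert]; exact Set.mem_insert _ _), fun z _ => rfl⟩
    · rw [hcleq]; exact hg.1
    · rw [hcleq, hg.2]
      have hgx : g x ∈ N.cl (g '' ↑X) := by rw [← hg.2]; exact ⟨x, hx, rfl⟩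
      apply Set.Subset.antisymm
      · refine pN.mono ?_
        rw [Finset.coe_insert, Set.image_insert_eq]
        exact Set.subset_insert _ _
      · have h1 : g '' ↑(insert x X) ⊆ N.cl (g '' ↑X) := by
          rw [Finset.coe_insert, Set.image_insert_eq]
          exact Set.insert_subset hgx (pN.subset_cl _)
        have := pN.mono h1
        rwa [pN.idem] at this
  · obtain ⟨x', hx'⟩ := hNbig (X.image g)
    rw [Finset.coe_image] at hx'
    have hx'' : x' ∉ N.cl (g '' (M.cl ↑X)) := by rwa [hg.2, pN.idem]
    have hxcl : x ∉ M.cl (M.cl ↑X) := by rwa [pM.idem]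
    have hEG : EmptyOrCtbleClosed M (M.cl ↑X) :=
      Or.inr ⟨hC.axI.ccp M hM _ X.finite_toSet, pM.idem _⟩
    have hEG' : EmptyOrCtbleClosed N (g '' (M.cl ↑X)) := by
      rw [hg.2]
      exact Or.inr ⟨hC.axI.ccp N hN _ (X.finite_toSet.image g), pN.idem _⟩
    have hg1 := hC.axII.homog1 M N hM hN (M.cl ↑X) (g '' (M.cl ↑X)) g hEG hEG'
      hg.1 rfl x x' hxcl hx''
    obtain ⟨h, hSys, hagr, hval⟩ := ext_lemma hC hM hN hg hx hg1
    exact ⟨h, insert x X, hSys, Finset.subset_insert _ _, pM.subset_cl _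
      (by rw [Finset.coe_insert]; exact Set.mem_insert _ _), hagr⟩

theorem sys_back [Nonempty M.carrier] [Nonempty N.carrier]
    [DecidableEq M.carrier] [DecidableEq N.carrier]
    (hC : IsQEC C) (hM : C M) (hN : C N)
    (hMbig : ∀ Y : Finset M.carrier, ∃ y, y ∉ M.cl ↑Y)
    {g : M.carrier → N.carrier} {X : Finset M.carrier} (hg : Sys M N g X)
    (b : N.carrier) :
    ∃ (h : M.carrier → N.carrier) (X' : Finset M.carrier), Sys M N h X' ∧ X ⊆ X' ∧
      b ∈ h '' (M.cl ↑X') ∧ ∀ z ∈ M.cl ↑X, h z = g z := by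
  classical
  have pM := hC.axI.pregeom M hM
  have pN := hC.axI.pregeom N hN
  by_cases hb : b ∈ N.cl (g '' ↑X)
  · exact ⟨g, X, hg, subset_rfl, by rw [hg.2]; exact hb, fun z _ => rfl⟩
  · obtain ⟨x, hx⟩ := hMbig X
    have hb' : b ∉ N.cl (g '' (M.cl ↑X)) := by rwa [hg.2, pN.idem]
    have hxcl : x ∉ M.cl (M.cl ↑X) := by rwa [pM.idem]
    have hEG : EmptyOrCtbleClosed M (M.cl ↑X) :=
      Or.inr ⟨hC.axI.ccp M hM _ X.finite_toSet, pM.idem _⟩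
    have hEG' : EmptyOrCtbleClosed N (g '' (M.cl ↑X)) := by
      rw [hg.2]
      exact Or.inr ⟨hC.axI.ccp N hN _ (X.finite_toSet.image g), pN.idem _⟩
    have hg1 := hC.axII.homog1 M N hM hN (M.cl ↑X) (g '' (M.cl ↑X)) g hEG hEG'
      hg.1 rfl x b hxcl hb'
    obtain ⟨h, hSys, hagr, hval⟩ := ext_lemma hC hM hN hg hx hg1
    refine ⟨h, insert x X, hSys, Finset.subset_insert _ _, ⟨x, ?_, hval⟩, hagr⟩
    exact pM.subset_cl _ (by rw [Finset.coe_insert]; exact Set.mem_insert _ _)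

/-- A closed `L`-embedding gives a good partial isomorphism on every
finite-dimensional closed set. -/
theorem sys_of_embedding [Nonempty M.carrier] [Nonempty N.carrier]
    (hC : IsQEC C) (hM : C M) (hN : C N)
    (f : M.carrier ↪[L] N.carrier) (hcl : N.cl (Set.range ⇑f) = Set.range ⇑f)
    (X : Finset M.carrier) : Sys M N (⇑f) X := by
  have pM := hC.axI.pregeom M hM
  have pN := hC.axI.pregeom N hN
  refine ⟨embedding_isPartialEmb f _, ?_⟩
  apply Set.Subset.antisymm
  · rintro _ ⟨z, hz, rfl⟩
    exact hC.axI.clPreserved M N hM hN Set.univ ⇑f (embedding_isPartialEmb f _)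
      ↑X (Set.subset_univ _) z hz (Set.mem_univ z)
  · intro w hw
    have hwrange : w ∈ Set.range ⇑f := by
      rw [← hcl]
      exact pN.mono (Set.image_subset_range _ _) hw
    have finvPE : IsPartialEmb N M (Set.range ⇑f) (Function.invFunOn ⇑f Set.univ) := by
      have := (embedding_isPartialEmb f Set.univ).inv
      rwa [Set.image_univ] at this
    have hkey := hC.axI.clPreserved N M hN hM (Set.range ⇑f)
      (Function.invFunOn ⇑f Set.univ) finvPE (⇑f '' ↑X) (Set.image_subset_range _ _)
      w hw hwrange
    have himg : Function.invFunOn ⇑f Set.univ '' (⇑f '' ↑X) = ↑X :=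
      (f.injective.injOn).invFunOn_image (Set.subset_univ _)
    rw [himg] at hkey
    obtain ⟨z, rfl⟩ := hwrange
    have hfz : Function.invFunOn ⇑f Set.univ (f z) = z :=
      (f.injective.injOn).leftInvOn_invFunOn (Set.mem_univ z)
    rw [hfz] at hkey
    exact ⟨z, hkey, rfl⟩

/-- Main induction: elements of the system preserve all first-order formulas. -/
theorem sys_elementary [Nonempty M.carrier] [Nonempty N.carrier]
    [DecidableEq M.carrier] [DecidableEq N.carrier]
    (hC : IsQEC C) (hM : C M) (hN : C N)
    (hMbig : ∀ Y : Finset M.carrier, ∃ y, y ∉ M.cl ↑Y)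
    (hNbig : ∀ Y : Finset N.carrier, ∃ y', y' ∉ N.cl ↑Y)
    {n : ℕ} : ∀ {k : ℕ} (φ : L.BoundedFormula (Fin n) k)
      (g : M.carrier → N.carrier) (X : Finset M.carrier), Sys M N g X →
      ∀ (v : Fin n → M.carrier) (xs : Fin k → M.carrier),
        (∀ i, v i ∈ M.cl ↑X) → (∀ i, xs i ∈ M.cl ↑X) →
        (φ.Realize v xs ↔ φ.Realize (g ∘ v) (g ∘ xs)) := by
  intro k φ
  induction φ with
  | falsum => exact fun g X hg v xs hv hxs => Iff.rfl
  | equal t₁ t₂ =>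
    intro g X hg v xs hv hxs
    exact hg.1.realize_boundedFormula (BoundedFormula.IsAtomic.equal t₁ t₂).isQF hv hxs
  | rel R ts =>
    intro g X hg v xs hv hxs
    exact hg.1.realize_boundedFormula (BoundedFormula.IsAtomic.rel R ts).isQF hv hxs
  | imp φ₁ φ₂ ih₁ ih₂ =>
    intro g X hg v xs hv hxs
    simp only [BoundedFormula.realize_imp]
    rw [ih₁ g X hg v xs hv hxs, ih₂ g X hg v xs hv hxs]
  | all φ ih =>
    intro g X hg v xs hv hxs
    have pM := hC.axI.pregeom M hM
    simp only [BoundedFormula.realize_all]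
    constructor
    · intro hH b
      obtain ⟨h, X', hSys, hXX', hbim, hagr⟩ := sys_back hC hM hN hMbig hg b
      obtain ⟨a, haM, haeq⟩ := hbim
      have hclmono : M.cl ↑X ⊆ M.cl ↑X' := pM.mono (Finset.coe_subset.2 hXX')
      have hv' : ∀ i, v i ∈ M.cl ↑X' := fun i => hclmono (hv i)
      have hxs' : ∀ i, (Fin.snoc xs a : Fin _ → M.carrier) i ∈ M.cl ↑X' := by
        intro i
        refine Fin.lastCases ?_ ?_ i
        · rw [Fin.snoc_last]; exact haM
        · intro j; rw [Fin.snoc_castSucc]; exact hclmono (hxs j)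
      have hiff := ih h X' hSys v (Fin.snoc xs a) hv' hxs'
      have h1 := hiff.mp (hH a)
      rw [Fin.comp_snoc] at h1
      have hcv : h ∘ v = g ∘ v := funext fun i => hagr (v i) (hv i)
      have hcxs : h ∘ xs = g ∘ xs := funext fun i => hagr (xs i) (hxs i)
      rw [hcv, hcxs, haeq] at h1
      exact h1
    · intro hH a
      obtain ⟨h, X', hSys, hXX', haM, hagr⟩ := sys_forth hC hM hN hNbig hg a
      have hclmono : M.cl ↑X ⊆ M.cl ↑X' := pM.mono (Finset.coe_subset.2 hXX')
      have hv' : ∀ i, v i ∈ M.cl ↑X' := fun i => hclmono (hv i)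
      have hxs' : ∀ i, (Fin.snoc xs a : Fin _ → M.carrier) i ∈ M.cl ↑X' := by
        intro i
        refine Fin.lastCases ?_ ?_ i
        · rw [Fin.snoc_last]; exact haM
        · intro j; rw [Fin.snoc_castSucc]; exact hclmono (hxs j)
      have hiff := ih h X' hSys v (Fin.snoc xs a) hv' hxs'
      refine hiff.mpr ?_
      rw [Fin.comp_snoc]
      have hcv : h ∘ v = g ∘ v := funext fun i => hagr (v i) (hv i)
      have hcxs : h ∘ xs = g ∘ xs := funext fun i => hagr (xs i) (hxs i)
      rw [hcv, hcxs]
      exact hH (h a)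
end
/-- a closed embedding between models of a quasiminimal excellent
class whose domain has infinite dimension is an elementary embedding. -/
theorem statement_13 (L : FirstOrder.Language.{u, u}) (C : QMModel L → Prop)
    (hC : IsQEC C) (M N : QMModel L) (hM : C M) (hN : C N)
    (f : M.carrier ↪[L] N.carrier) (hcl : N.cl (Set.range ⇑f) = Set.range ⇑f)
    (hdim : ∃ B : Set M.carrier, IsBasisOver M.cl ∅ B ∧ ℵ₀ ≤ #B) :
    ∀ (n : ℕ) (θ : L.Formula (Fin n)) (a : Fin n → M.carrier),
      θ.Realize a ↔ θ.Realize (⇑f ∘ a) := by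
  classical
  intro n θ a
  obtain ⟨B, hBbasis, hBcard⟩ := hdim
  have hBinf : B.Infinite := by
    rw [← Set.infinite_coe_iff]
    exact Cardinal.infinite_iff.2 hBcard
  have hBind : ∀ b ∈ B, b ∉ M.cl (B \ {b}) := by
    intro b hb hc
    exact hBbasis.1 b hb (by rwa [Set.empty_union])
  obtain ⟨b₀, hb₀⟩ := hBinf.nonempty
  haveI : Nonempty M.carrier := ⟨b₀⟩
  haveI : Nonempty N.carrier := ⟨f b₀⟩
  have pM := hC.axI.pregeom M hM
  have pN := hC.axI.pregeom N hN
  have hMbig : ∀ Y : Finset M.carrier, ∃ y, y ∉ M.cl ↑Y :=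
    exists_notin_cl pM hBind hBinf
  -- the image of `B` is infinite and independent in `N`
  have hfBinf : (⇑f '' B).Infinite := hBinf.image (f.injective.injOn)
  have hfBind : ∀ w ∈ ⇑f '' B, w ∉ N.cl ((⇑f '' B) \ {w}) := by
    rintro _ ⟨b, hb, rfl⟩ hc
    have hsub : (⇑f '' B) \ {f b} ⊆ ⇑f '' (B \ {b}) := by
      rintro _ ⟨⟨b', hb', rfl⟩, hne⟩
      exact ⟨b', ⟨hb', fun hcc => hne (by rw [hcc]; rfl)⟩, rfl⟩
    have h1 : f b ∈ N.cl (⇑f '' (B \ {b})) := pN.mono hsub hc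
    obtain ⟨Y₀, hY₀sub, hY₀mem⟩ := pN.finChar _ _ h1
    have hY₀range : (↑Y₀ : Set N.carrier) ⊆ Set.range ⇑f :=
      hY₀sub.trans ((Set.image_subset_range _ _))
    have finvPE : IsPartialEmb N M (Set.range ⇑f) (Function.invFunOn ⇑f Set.univ) := by
      have := (embedding_isPartialEmb f Set.univ).inv
      rwa [Set.image_univ] at this
    have hkey := hC.axI.clPreserved N M hN hM (Set.range ⇑f)
      (Function.invFunOn ⇑f Set.univ) finvPE ↑Y₀ hY₀range (f b) hY₀mem ⟨b, rfl⟩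
    have hfb : Function.invFunOn ⇑f Set.univ (f b) = b :=
      (f.injective.injOn).leftInvOn_invFunOn (Set.mem_univ b)
    rw [hfb] at hkey
    have hsub2 : Function.invFunOn ⇑f Set.univ '' ↑Y₀ ⊆ B \ {b} := by
      rintro _ ⟨y, hy, rfl⟩
      obtain ⟨b', hb', rfl⟩ := hY₀sub hy
      rw [(f.injective.injOn).leftInvOn_invFunOn (Set.mem_univ b')]
      exact hb'
    exact hBind b hb (pM.mono hsub2 hkey)
  have hNbig : ∀ Y : Finset N.carrier, ∃ y', y' ∉ N.cl ↑Y :=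
    exists_notin_cl pN hfBind hfBinf
  -- the base system element
  set X : Finset M.carrier := Finset.image a Finset.univ with hXdef
  have hSys : Sys M N (⇑f) X := sys_of_embedding hC hM hN f hcl X
  have hv : ∀ i, a i ∈ M.cl ↑X := by
    intro i
    refine pM.subset_cl _ ?_
    rw [hXdef, Finset.coe_image]
    exact ⟨i, Finset.mem_coe.2 (Finset.mem_univ i), rfl⟩
  have hmain := sys_elementary hC hM hN hMbig hNbig θ ⇑f X hSys a
    (default : Fin 0 → M.carrier) hv (fun i => i.elim0)
  have hde : (⇑f ∘ (default : Fin 0 → M.carrier)) = (default : Fin 0 → N.carrier) :=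
    funext fun i => i.elim0
  rw [Formula.Realize, Formula.Realize]
  rw [show (default : Fin 0 → N.carrier) = ⇑f ∘ (default : Fin 0 → M.carrier) from hde.symm]
  exact hmain
end QMEC
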